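/- arXiv:2105.03697 — 2 statements merged into one kernel-verified Lean document; each statement's English description precedes it below -/
import Mathlib

section
/- Let Π ⊆ {1,-1}^n be a k-wise independent set with |Π| < 2^{n/5} and let ε > 0 be a sufficiently small constant. Then any unbounded-error randomized query algorithm (UPP algorithm) that accepts every x ∈ Π with probability strictly greater than 1/2 and rejects every x that is ε-far from Π (in relative Hamming distance) with probability strictly greater than 1/2 must make at least k queries. -/
open scoped Classical

/-- Decision trees querying coordinates of an input in `{1,-1}ⁿ`. -/
inductive DTree (n : ℕ) : Type
  | leaf : Bool → DTree n
  | node : Fin n → DTree n → DTree n → DTree n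

/-- Depth of a decision tree. -/
def DTree.depth {n : ℕ} : DTree n → ℕ
  | .leaf _ => 0
  | .node _ l r => max l.depth r.depth + 1

/-- Evaluation of a decision tree on `x ∈ {1,-1}ⁿ` (branching on `xᵢ = 1`). -/
noncomputable def DTree.eval {n : ℕ} : DTree n → (Fin n → ℝ) → Bool
  | .leaf b, _ => b
  | .node i l r, x => if x i = 1 then l.eval x else r.eval x

/-- A set `S ⊆ {1,-1}ⁿ` is `k`-wise independent. -/
def kwiseIndep (n k : ℕ) (S : Finset (Fin n → ℝ)) : Prop :=
  ∀ I : Finset (Fin n), I.card = k → ∀ y : Fin n → ℝ,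
    (∀ i, y i = 1 ∨ y i = -1) →
    (S.filter (fun x => ∀ i ∈ I, x i = y i)).card * 2 ^ k = S.card

open Matrix

namespace KW

def Bal (n k : ℕ) (S : Finset (Fin n → ℝ)) : Prop :=
  ∀ I : Finset (Fin n), I.card ≤ k → ∀ y : Fin n → ℝ,
    (∀ i, y i = 1 ∨ y i = -1) →
    (S.filter (fun x => ∀ i ∈ I, x i = y i)).card * 2 ^ I.card = S.card

lemma update_cube {n : ℕ} {y : Fin n → ℝ} (hy : ∀ i, y i = 1 ∨ y i = -1)
    {c : ℝ} (hc : c = 1 ∨ c = -1) (i : Fin n) :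
    ∀ i', Function.update y i c i' = 1 ∨ Function.update y i c i' = -1 := by
  intro i'
  by_cases h : i' = i
  · subst h; simpa using hc
  · simpa [Function.update_of_ne h] using hy i'

lemma agree_insert {n : ℕ} {I : Finset (Fin n)} {i : Fin n} (hi : i ∉ I)
    (y x : Fin n → ℝ) (c : ℝ) :
    (∀ i' ∈ insert i I, x i' = Function.update y i c i') ↔
      (x i = c ∧ ∀ i' ∈ I, x i' = y i') := by
  constructor
  · intro h
    refine ⟨by simpa using h i (Finset.mem_insert_self i I), fun i' hi' => ?_⟩
    have hne : i' ≠ i := fun he => hi (he ▸ hi')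
    simpa [Function.update_of_ne hne] using h i' (Finset.mem_insert_of_mem hi')
  · rintro ⟨h1, h2⟩ i' hi'
    rcases Finset.mem_insert.mp hi' with he | hm
    · subst he; simpa using h1
    · have hne : i' ≠ i := fun he => hi (he ▸ hm)
      simpa [Function.update_of_ne hne] using h2 i' hm

lemma bal_of_kwise {n k : ℕ} (hkn : k ≤ n) {S : Finset (Fin n → ℝ)}
    (hcube : ∀ x ∈ S, ∀ i, x i = 1 ∨ x i = -1) (h : kwiseIndep n k S) :
    Bal n k S := by
  have key : ∀ m : ℕ, ∀ I : Finset (Fin n), I.card + m = k → ∀ y : Fin n → ℝ,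
      (∀ i, y i = 1 ∨ y i = -1) →
      (S.filter (fun x => ∀ i ∈ I, x i = y i)).card * 2 ^ I.card = S.card := by
    intro m
    induction m with
    | zero =>
        intro I hI y hy
        rw [show I.card = k by omega]
        exact h I (by omega) y hy
    | succ m ih =>
        intro I hI y hy
        have hlt : I.card < n := by
          have h1 : I.card ≤ Finset.univ.card := Finset.card_le_univ I
          simp only [Finset.card_univ, Fintype.card_fin] at h1
          omega
        obtain ⟨i, hi⟩ : ∃ i, i ∉ I := by
          by_contra hall; push_neg at hall
          have : I = Finset.univ := Finset.eq_univ_of_forall hall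
          rw [this, Finset.card_univ, Fintype.card_fin] at hlt; omega
        have hI' : (insert i I).card = I.card + 1 := Finset.card_insert_of_notMem hi
        have harith : (insert i I).card + m = k := by omega
        have h1 := ih (insert i I) harith (Function.update y i 1)
          (update_cube hy (Or.inl rfl) i)
        have h2 := ih (insert i I) harith (Function.update y i (-1))
          (update_cube hy (Or.inr rfl) i)
        rw [hI'] at h1 h2
        have hsplit : S.filter (fun x => ∀ i' ∈ I, x i' = y i')
            = S.filter (fun x => ∀ i' ∈ insert i I, x i' = Function.update y i 1 i')
              ∪ S.filter (fun x => ∀ i' ∈ insert i I, x i' = Function.update y i (-1) i') := by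
          ext x
          simp only [Finset.mem_union, Finset.mem_filter]
          constructor
          · rintro ⟨hxS, hagree⟩
            rcases hcube x hxS i with hx1 | hx1
            · exact Or.inl ⟨hxS, (agree_insert hi y x 1).mpr ⟨hx1, hagree⟩⟩
            · exact Or.inr ⟨hxS, (agree_insert hi y x (-1)).mpr ⟨hx1, hagree⟩⟩
          · rintro (⟨hxS, hagree⟩ | ⟨hxS, hagree⟩)
            · exact ⟨hxS, ((agree_insert hi y x 1).mp hagree).2⟩
            · exact ⟨hxS, ((agree_insert hi y x (-1)).mp hagree).2⟩
        have hdisj : Disjoint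
            (S.filter (fun x => ∀ i' ∈ insert i I, x i' = Function.update y i 1 i'))
            (S.filter (fun x => ∀ i' ∈ insert i I, x i' = Function.update y i (-1) i')) := by
          rw [Finset.disjoint_left]
          intro x hx1 hx2
          simp only [Finset.mem_filter] at hx1 hx2
          have e1 := ((agree_insert hi y x 1).mp hx1.2).1
          have e2 := ((agree_insert hi y x (-1)).mp hx2.2).1
          rw [e1] at e2; norm_num at e2
        set a := (S.filter (fun x => ∀ i' ∈ insert i I, x i' = Function.update y i 1 i')).card with ha
        set b := (S.filter (fun x => ∀ i' ∈ insert i I, x i' = Function.update y i (-1) i')).card with hb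
        have hab : a = b := Nat.eq_of_mul_eq_mul_right (pow_pos two_pos _) (h1.trans h2.symm)
        rw [hsplit, Finset.card_union_of_disjoint hdisj, ← ha, ← hb, ← hab]
        calc (a + a) * 2 ^ I.card = a * 2 ^ (I.card + 1) := by rw [pow_succ]; ring
        _ = S.card := h1
  intro I hI y hy
  exact key (k - I.card) I (by omega) y hy

lemma tree_count {n k : ℕ} {S₁ S₂ : Finset (Fin n → ℝ)}
    (hb₁ : Bal n k S₁) (hc₁ : ∀ x ∈ S₁, ∀ i, x i = 1 ∨ x i = -1)
    (hb₂ : Bal n k S₂) (hc₂ : ∀ x ∈ S₂, ∀ i, x i = 1 ∨ x i = -1) :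
    ∀ (T : DTree n) (I : Finset (Fin n)) (y : Fin n → ℝ),
      (∀ i, y i = 1 ∨ y i = -1) → T.depth + I.card ≤ k →
      (S₁.filter (fun x => (∀ i ∈ I, x i = y i) ∧ T.eval x = true)).card * S₂.card
        = (S₂.filter (fun x => (∀ i ∈ I, x i = y i) ∧ T.eval x = true)).card * S₁.card := by
  intro T
  induction T with
  | leaf b =>
      intro I y hy hdep
      cases b with
      | false =>
          have e : ∀ S : Finset (Fin n → ℝ),
              S.filter (fun x => (∀ i ∈ I, x i = y i) ∧ (DTree.leaf false : DTree n).eval x = true) = ∅ := by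
            intro S
            apply Finset.filter_false_of_mem
            rintro x hx ⟨-, h⟩
            simp [DTree.eval] at h
          rw [e S₁, e S₂]; simp
      | true =>
          have e : ∀ S : Finset (Fin n → ℝ),
              S.filter (fun x => (∀ i ∈ I, x i = y i) ∧ (DTree.leaf true : DTree n).eval x = true)
                = S.filter (fun x => ∀ i ∈ I, x i = y i) := by
            intro S
            apply Finset.filter_congr
            intro x hx
            simp [DTree.eval]
          have hIk : I.card ≤ k := by simp [DTree.depth] at hdep; omega
          have h1 := hb₁ I hIk y hy
          have h2 := hb₂ I hIk y hy
          rw [e S₁, e S₂, ← h1, ← h2]; ring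
  | node i l r ihl ihr =>
      intro I y hy hdep
      simp only [DTree.depth] at hdep
      by_cases hiI : i ∈ I
      · rcases hy i with hyi | hyi
        · have e : ∀ (S : Finset (Fin n → ℝ)),
              S.filter (fun x => (∀ i' ∈ I, x i' = y i') ∧ (DTree.node i l r).eval x = true)
                = S.filter (fun x => (∀ i' ∈ I, x i' = y i') ∧ l.eval x = true) := by
            intro S
            apply Finset.filter_congr
            intro x hx
            constructor
            · rintro ⟨hag, hev⟩
              refine ⟨hag, ?_⟩
              rw [show (DTree.node i l r).eval x = l.eval x by
                simp [DTree.eval, hag i hiI, hyi]] at hev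
              exact hev
            · rintro ⟨hag, hev⟩
              exact ⟨hag, by simp [DTree.eval, hag i hiI, hyi, hev]⟩
          rw [e S₁, e S₂]
          exact ihl I y hy (by omega)
        · have e : ∀ (S : Finset (Fin n → ℝ)),
              S.filter (fun x => (∀ i' ∈ I, x i' = y i') ∧ (DTree.node i l r).eval x = true)
                = S.filter (fun x => (∀ i' ∈ I, x i' = y i') ∧ r.eval x = true) := by
            intro S
            apply Finset.filter_congr
            intro x hx
            have hx1 : ∀ (h : ∀ i' ∈ I, x i' = y i'), x i ≠ 1 := by
              intro h hc
              rw [h i hiI, hyi] at hc; norm_num at hc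
            constructor
            · rintro ⟨hag, hev⟩
              refine ⟨hag, ?_⟩
              rw [show (DTree.node i l r).eval x = r.eval x by
                simp [DTree.eval, hx1 hag]] at hev
              exact hev
            · rintro ⟨hag, hev⟩
              exact ⟨hag, by simp [DTree.eval, hx1 hag, hev]⟩
          rw [e S₁, e S₂]
          exact ihr I y hy (by omega)
      · have hsplit : ∀ (S : Finset (Fin n → ℝ)), (∀ x ∈ S, ∀ i, x i = 1 ∨ x i = -1) →
            S.filter (fun x => (∀ i' ∈ I, x i' = y i') ∧ (DTree.node i l r).eval x = true)
              = S.filter (fun x => (∀ i' ∈ insert i I, x i' = Function.update y i 1 i') ∧ l.eval x = true)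
                ∪ S.filter (fun x => (∀ i' ∈ insert i I, x i' = Function.update y i (-1) i') ∧ r.eval x = true) := by
          intro S hc
          ext x
          simp only [Finset.mem_union, Finset.mem_filter]
          constructor
          · rintro ⟨hxS, hag, hev⟩
            rcases hc x hxS i with hx1 | hx1
            · left
              refine ⟨hxS, (agree_insert hiI y x 1).mpr ⟨hx1, hag⟩, ?_⟩
              rw [show (DTree.node i l r).eval x = l.eval x by simp [DTree.eval, hx1]] at hev
              exact hev
            · right
              refine ⟨hxS, (agree_insert hiI y x (-1)).mpr ⟨hx1, hag⟩, ?_⟩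
              have : x i ≠ 1 := by rw [hx1]; norm_num
              rw [show (DTree.node i l r).eval x = r.eval x by simp [DTree.eval, this]] at hev
              exact hev
          · rintro (⟨hxS, hag, hev⟩ | ⟨hxS, hag, hev⟩)
            · obtain ⟨hx1, hag'⟩ := (agree_insert hiI y x 1).mp hag
              exact ⟨hxS, hag', by simp [DTree.eval, hx1, hev]⟩
            · obtain ⟨hx1, hag'⟩ := (agree_insert hiI y x (-1)).mp hag
              have : x i ≠ 1 := by rw [hx1]; norm_num
              exact ⟨hxS, hag', by simp [DTree.eval, this, hev]⟩
        have hdisj : ∀ (S : Finset (Fin n → ℝ)), Disjoint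
            (S.filter (fun x => (∀ i' ∈ insert i I, x i' = Function.update y i 1 i') ∧ l.eval x = true))
            (S.filter (fun x => (∀ i' ∈ insert i I, x i' = Function.update y i (-1) i') ∧ r.eval x = true)) := by
          intro S
          rw [Finset.disjoint_left]
          intro x hx1 hx2
          simp only [Finset.mem_filter] at hx1 hx2
          have e1 := ((agree_insert hiI y x 1).mp hx1.2.1).1
          have e2 := ((agree_insert hiI y x (-1)).mp hx2.2.1).1
          rw [e1] at e2; norm_num at e2
        have hcI : (insert i I).card = I.card + 1 := Finset.card_insert_of_notMem hiI
        have harith1 : l.depth + (insert i I).card ≤ k := by omega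
        have harith2 : r.depth + (insert i I).card ≤ k := by omega
        have hl := ihl (insert i I) (Function.update y i 1) (update_cube hy (Or.inl rfl) i)
          harith1
        have hr := ihr (insert i I) (Function.update y i (-1)) (update_cube hy (Or.inr rfl) i)
          harith2
        rw [hsplit S₁ hc₁, hsplit S₂ hc₂,
          Finset.card_union_of_disjoint (hdisj S₁), Finset.card_union_of_disjoint (hdisj S₂),
          Nat.add_mul, Nat.add_mul, hl, hr]




lemma zmod2_ne : ∀ a b c : ZMod 2, a ≠ c → b ≠ c → a = b := by decide

lemma card_image_filter_mul {α β : Type*} [Fintype α] [DecidableEq β] (f : α → β) (c : ℕ)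
    (hc : ∀ a : α, (Finset.univ.filter fun a' => f a' = f a).card = c)
    (p : β → Prop) [DecidablePred p] :
    ((Finset.univ.image f).filter p).card * c
      = (Finset.univ.filter fun a => p (f a)).card := by
  have hmap : ∀ a ∈ (Finset.univ.filter fun a => p (f a)),
      f a ∈ (Finset.univ.image f).filter p := by
    intro a ha
    simp only [Finset.mem_filter, Finset.mem_univ, true_and] at ha ⊢
    exact ⟨Finset.mem_image_of_mem f (Finset.mem_univ a), ha⟩
  have h := Finset.card_eq_sum_card_fiberwise hmap
  have hfib : ∀ b ∈ (Finset.univ.image f).filter p,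
      ((Finset.univ.filter fun a => p (f a)).filter fun a => f a = b).card = c := by
    intro b hb
    simp only [Finset.mem_filter, Finset.mem_image] at hb
    obtain ⟨⟨a₀, -, ha₀⟩, hpb⟩ := hb
    have he : ((Finset.univ.filter fun a => p (f a)).filter fun a => f a = b)
        = Finset.univ.filter fun a => f a = b := by
      ext a
      simp only [Finset.mem_filter, Finset.mem_univ, true_and]
      exact ⟨fun h => h.2, fun h => ⟨by rw [h]; exact hpb, h⟩⟩
    rw [he, ← ha₀, hc a₀]
  rw [h, Finset.sum_congr rfl hfib, Finset.sum_const, smul_eq_mul]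

lemma fiber_card_add {d : ℕ} {V : Type*} [AddCommGroup V] [DecidableEq V]
    (φ : (Fin d → ZMod 2) → V) (hφ : ∀ u v, φ (u + v) = φ u + φ v)
    {b : V} (u₀ : Fin d → ZMod 2) (hb : φ u₀ = b) :
    (Finset.univ.filter fun u => φ u = b).card
      = (Finset.univ.filter fun u => φ u = 0).card := by
  apply Finset.card_bij' (fun u _ => u - u₀) (fun w _ => w + u₀)
  · intro u hu
    simp only [Finset.mem_filter, Finset.mem_univ, true_and] at hu ⊢
    have h1 : φ (u - u₀) + φ u₀ = φ u := by
      rw [← hφ]; congr 1; abel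
    rw [hu, hb] at h1
    exact add_eq_right.mp h1
  · intro w hw
    simp only [Finset.mem_filter, Finset.mem_univ, true_and] at hw ⊢
    rw [hφ, hw, hb, zero_add]
  · intro u _; abel
  · intro w _; abel

lemma rows_surj {n d k : ℕ} (G : Fin n → Fin d → ZMod 2)
    (hlow : ∀ v : Fin n → ZMod 2, v ≠ 0 →
      (Finset.univ.filter fun i => v i ≠ 0).card ≤ k → ∃ j, ∑ i, v i * G i j ≠ 0)
    (I : Finset (Fin n)) (hI : I.card = k) (target : Fin n → ZMod 2) :
    ∃ u : Fin d → ZMod 2, ∀ i ∈ I, (∑ j, G i j * u j) = target i := by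
  haveI : Fact (Nat.Prime 2) := ⟨Nat.prime_two⟩
  set M : Matrix ↥I (Fin d) (ZMod 2) := fun i j => G i.1 j with hM
  have hinj : Function.Injective (Mᵀ.mulVecLin) := by
    rw [← LinearMap.ker_eq_bot, LinearMap.ker_eq_bot']
    intro c hc
    by_contra hc0
    set v : Fin n → ZMod 2 := fun i => if h : i ∈ I then c ⟨i, h⟩ else 0 with hv
    have hvne : v ≠ 0 := by
      intro h0
      apply hc0
      funext i
      have := congrFun h0 i.1
      simpa [hv, i.2] using this
    have hsupp : (Finset.univ.filter fun i => v i ≠ 0).card ≤ k := by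
      rw [← hI]
      apply Finset.card_le_card
      intro i hi
      simp only [Finset.mem_filter, Finset.mem_univ, true_and] at hi
      by_contra hiI
      exact hi (by simp [hv, hiI])
    obtain ⟨j, hj⟩ := hlow v hvne hsupp
    apply hj
    have h1 : ∑ i, v i * G i j = ∑ i ∈ I, v i * G i j := by
      rw [Finset.sum_subset (Finset.subset_univ I)]
      intro i _ hiI
      simp [hv, hiI]
    have h2 : ∑ i ∈ I, v i * G i j = ∑ i : ↥I, c i * M i j := by
      rw [← Finset.sum_coe_sort I (fun i => v i * G i j)]
      apply Finset.sum_congr rfl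
      intro i _
      simp [hv, i.2, hM]
    have h4 : Matrix.vecMul c M j = 0 := by
      have := congrFun hc j
      simpa [Matrix.mulVecLin_apply] using this
    rw [h1, h2]
    simp only [Matrix.vecMul, dotProduct] at h4
    exact h4
  have hrankT : Mᵀ.rank = k := by
    have hr := LinearMap.finrank_range_of_inj hinj
    rw [Matrix.rank, hr, Module.finrank_pi, Fintype.card_coe, hI]
  have hrank : M.rank = k := by rw [← Matrix.rank_transpose]; exact hrankT
  have hsurj : Function.Surjective (M.mulVecLin) := by
    rw [← LinearMap.range_eq_top]
    apply Submodule.eq_top_of_finrank_eq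
    have hdef : Module.finrank (ZMod 2) ↥(LinearMap.range M.mulVecLin) = M.rank := rfl
    rw [hdef, hrank, Module.finrank_pi, Fintype.card_coe, hI]
  obtain ⟨u, hu⟩ := hsurj (fun i : ↥I => target i.1)
  refine ⟨u, fun i hi => ?_⟩
  have := congrFun hu ⟨i, hi⟩
  exact this




lemma zmod2_ne' : ∀ a b c : ZMod 2, a ≠ c → b ≠ c → a = b := by decide
lemma zmod2_one : ∀ a : ZMod 2, a ≠ 0 → a = 1 := by decide
lemma nat_lt_helper (a b c N : ℕ) (h : a ≤ b + c) (hb : 4*b ≤ N) (hc : 4*c ≤ N) (hN : 0 < N) :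
    a < N := by omega
lemma zmod2_addl : ∀ a b : ZMod 2, a + (a + b) = b := by decide
lemma zmod2_cancel : ∀ a b c : ZMod 2, a + b = 0 → a + c = 0 → b = c := by decide

/-- fibers of the evaluation-at-one-row map all have the same size -/
lemma card_row_zero {n d : ℕ} (i₀ : Fin n) (b : Fin d → ZMod 2) :
    (Finset.univ.filter
        fun ω : (Fin n → Fin d → ZMod 2) × (Fin n → ZMod 2) => ω.1 i₀ = b).card
      * 2^d
      = Fintype.card ((Fin n → Fin d → ZMod 2) × (Fin n → ZMod 2)) := by
  have hconst : ∀ b' : Fin d → ZMod 2,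
      (Finset.univ.filter
        fun ω : (Fin n → Fin d → ZMod 2) × (Fin n → ZMod 2) => ω.1 i₀ = b').card
      = (Finset.univ.filter
        fun ω : (Fin n → Fin d → ZMod 2) × (Fin n → ZMod 2) => ω.1 i₀ = b).card := by
    intro b'
    apply Finset.card_bij' (fun ω _ => (Function.update ω.1 i₀ b, ω.2))
      (fun ω _ => (Function.update ω.1 i₀ b', ω.2))
    · intro ω hω
      simp only [Finset.mem_filter, Finset.mem_univ, true_and] at hω
      have h1 : Function.update (Function.update ω.1 i₀ b) i₀ b' = ω.1 := by
        rw [Function.update_idem, ← hω, Function.update_eq_self]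
      calc (Function.update (Function.update ω.1 i₀ b) i₀ b', ω.2) = (ω.1, ω.2) := by rw [h1]
        _ = ω := rfl
    · intro ω hω
      simp only [Finset.mem_filter, Finset.mem_univ, true_and] at hω
      have h1 : Function.update (Function.update ω.1 i₀ b') i₀ b = ω.1 := by
        rw [Function.update_idem, ← hω, Function.update_eq_self]
      calc (Function.update (Function.update ω.1 i₀ b') i₀ b, ω.2) = (ω.1, ω.2) := by rw [h1]
        _ = ω := rfl
    · intro ω hω
      simp [Function.update_self]
    · intro ω hω
      simp [Function.update_self]
  have hmap : ∀ ω : (Fin n → Fin d → ZMod 2) × (Fin n → ZMod 2),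
      ω ∈ (Finset.univ : Finset _) → ω.1 i₀ ∈ (Finset.univ : Finset (Fin d → ZMod 2)) := by
    intro ω _; exact Finset.mem_univ _
  have h := Finset.card_eq_sum_card_fiberwise hmap
  rw [← Finset.card_univ, h]
  have : ∀ b' ∈ (Finset.univ : Finset (Fin d → ZMod 2)),
      ((Finset.univ : Finset ((Fin n → Fin d → ZMod 2) × (Fin n → ZMod 2))).filter
          fun ω => ω.1 i₀ = b').card
        = (Finset.univ.filter
          fun ω : (Fin n → Fin d → ZMod 2) × (Fin n → ZMod 2) => ω.1 i₀ = b).card :=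
    fun b' _ => hconst b'
  rw [Finset.sum_congr rfl this, Finset.sum_const, smul_eq_mul, mul_comm]
  congr 1
  rw [Finset.card_univ, Fintype.card_fun]
  simp

lemma card_filter_snd {α β : Type*} [Fintype α] [Fintype β] (q : β → Prop) [DecidablePred q] :
    (Finset.univ.filter fun x : α × β => q x.2).card
      = Fintype.card α * (Finset.univ.filter q).card := by
  have he : (Finset.univ.filter fun x : α × β => q x.2)
      = Finset.univ ×ˢ (Finset.univ.filter q) := by
    ext ⟨a, b⟩
    simp [Finset.mem_product]
  rw [he, Finset.card_product, Finset.card_univ]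

section ExistsGood

lemma exists_good (n k d : ℕ) (hkn : k ≤ n)
    (Pb : Finset (Fin n → ZMod 2))
    (Nlow Nball : ℕ)
    (hnumA : 4 * Nlow ≤ 2^d)
    (hnumB : 4 * (2^d * Pb.card * Nball) ≤ 2^n)
    (hlowct : (Finset.univ.filter fun v : Fin n → ZMod 2 =>
        (Finset.univ.filter fun i => v i ≠ 0).card ≤ k).card ≤ Nlow)
    (hballct : ∀ z : Fin n → ZMod 2, ((Finset.univ : Finset (Fin n → ZMod 2)).filter fun s =>
        (Finset.univ.filter fun i => s i ≠ z i).card ≤ n/256).card ≤ Nball) :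
    ∃ (G : Fin n → Fin d → ZMod 2) (t : Fin n → ZMod 2),
      (∀ v : Fin n → ZMod 2, v ≠ 0 → (Finset.univ.filter fun i => v i ≠ 0).card ≤ k →
        ∃ j, ∑ i, v i * G i j ≠ 0) ∧
      (∀ u : Fin d → ZMod 2, ∀ z ∈ Pb,
        n / 256 < (Finset.univ.filter fun i => ((∑ j, G i j * u j) + t i) ≠ z i).card) := by
  set Ω := ((Fin n → Fin d → ZMod 2) × (Fin n → ZMod 2))
  set badA : Ω → Prop := fun ω => ∃ v : Fin n → ZMod 2, v ≠ 0 ∧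
      (Finset.univ.filter fun i => v i ≠ 0).card ≤ k ∧ ∀ j, ∑ i, v i * ω.1 i j = 0
    with hbadA
  set badB : Ω → Prop := fun ω => ∃ u : Fin d → ZMod 2, ∃ z ∈ Pb,
      (Finset.univ.filter fun i => ((∑ j, ω.1 i j * u j) + ω.2 i) ≠ z i).card ≤ n/256
    with hbadB
  -- Bound on bad A
  have hA : 4 * ((Finset.univ : Finset Ω).filter badA).card ≤ Fintype.card Ω := by
    set lowv := (Finset.univ.filter fun v : Fin n → ZMod 2 => v ≠ 0 ∧
      (Finset.univ.filter fun i => v i ≠ 0).card ≤ k) with hlowv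
    have hsub : (Finset.univ : Finset Ω).filter badA ⊆
        lowv.biUnion (fun v => (Finset.univ : Finset Ω).filter
          (fun ω => ∀ j, ∑ i, v i * ω.1 i j = 0)) := by
      intro ω hω
      simp only [Finset.mem_filter, Finset.mem_univ, true_and, hbadA] at hω
      obtain ⟨v, hv1, hv2, hv3⟩ := hω
      apply Finset.mem_biUnion.mpr
      exact ⟨v, by simp [hlowv, hv1, hv2], by simp [hv3]⟩
    have hper : ∀ v ∈ lowv, ((Finset.univ : Finset Ω).filter
        (fun ω => ∀ j, ∑ i, v i * ω.1 i j = 0)).card * 2^d ≤ Fintype.card Ω := by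
      intro v hv
      simp only [hlowv, Finset.mem_filter, Finset.mem_univ, true_and] at hv
      obtain ⟨i₀, hi₀⟩ : ∃ i₀, v i₀ ≠ 0 := by
        by_contra hc; push_neg at hc
        exact hv.1 (funext fun i => hc i)
      have hv1 : v i₀ = 1 := zmod2_one _ hi₀
      have hvrow : ∀ (ωa : Ω), (∀ j, ∑ i, v i * ωa.1 i j = 0) → ∀ j,
          (∑ i ∈ Finset.univ.erase i₀, v i * ωa.1 i j) + ωa.1 i₀ j = 0 := by
        intro ωa hb j
        have h : (∑ i ∈ Finset.univ.erase i₀, v i * ωa.1 i j) + v i₀ * ωa.1 i₀ j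
            = ∑ i, v i * ωa.1 i j :=
          Finset.sum_erase_add _ _ (Finset.mem_univ i₀)
        rw [hv1, one_mul] at h
        rw [h, hb j]
      have hinj : ((Finset.univ : Finset Ω).filter
          (fun ω => ∀ j, ∑ i, v i * ω.1 i j = 0)).card ≤
          ((Finset.univ : Finset Ω).filter (fun ω => ω.1 i₀ = 0)).card := by
        apply Finset.card_le_card_of_injOn
          (fun ω => (Function.update ω.1 i₀ (fun j => ∑ i, v i * ω.1 i j), ω.2))
        · intro ω hω
          simp only [Finset.mem_coe, Finset.mem_filter, Finset.mem_univ, true_and] at hω ⊢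
          rw [Function.update_self]
          funext j
          exact hω j
        · intro ω hω ω' hω' he
          simp only [Finset.mem_coe, Finset.mem_filter, Finset.mem_univ, true_and] at hω hω'
          simp only [Prod.mk.injEq] at he
          obtain ⟨h1, h2⟩ := he
          have hrows : ∀ i, i ≠ i₀ → ω.1 i = ω'.1 i := by
            intro i hi
            have := congrFun h1 i
            rwa [Function.update_of_ne hi, Function.update_of_ne hi] at this
          have hsums : ∀ j, ∑ i ∈ Finset.univ.erase i₀, v i * ω.1 i j
              = ∑ i ∈ Finset.univ.erase i₀, v i * ω'.1 i j := by
            intro j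
            apply Finset.sum_congr rfl
            intro i hi
            rw [hrows i (Finset.ne_of_mem_erase hi)]
          have hrow0 : ω.1 i₀ = ω'.1 i₀ := by
            funext j
            exact zmod2_cancel _ _ _ ((hsums j) ▸ hvrow ω hω j) (hvrow ω' hω' j)
          have hfst : ω.1 = ω'.1 := by
            funext i
            by_cases hi : i = i₀
            · subst hi; rw [hrow0]
            · rw [hrows i hi]
          calc ω = (ω.1, ω.2) := rfl
            _ = (ω'.1, ω'.2) := by rw [hfst, h2]
            _ = ω' := rfl
      calc ((Finset.univ : Finset Ω).filter
          (fun ω => ∀ j, ∑ i, v i * ω.1 i j = 0)).card * 2^d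
          ≤ ((Finset.univ : Finset Ω).filter (fun ω => ω.1 i₀ = 0)).card * 2^d :=
            Nat.mul_le_mul_right _ hinj
        _ = Fintype.card Ω := card_row_zero i₀ 0
    have hcard : ((Finset.univ : Finset Ω).filter badA).card * 2^d
        ≤ lowv.card * Fintype.card Ω := by
      calc ((Finset.univ : Finset Ω).filter badA).card * 2^d
          ≤ (lowv.biUnion (fun v => (Finset.univ : Finset Ω).filter
              (fun ω => ∀ j, ∑ i, v i * ω.1 i j = 0))).card * 2^d :=
            Nat.mul_le_mul_right _ (Finset.card_le_card hsub)
        _ ≤ (∑ v ∈ lowv, ((Finset.univ : Finset Ω).filter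
              (fun ω => ∀ j, ∑ i, v i * ω.1 i j = 0)).card) * 2^d :=
            Nat.mul_le_mul_right _ Finset.card_biUnion_le
        _ = ∑ v ∈ lowv, ((Finset.univ : Finset Ω).filter
              (fun ω => ∀ j, ∑ i, v i * ω.1 i j = 0)).card * 2^d := by
            rw [Finset.sum_mul]
        _ ≤ ∑ _v ∈ lowv, Fintype.card Ω := Finset.sum_le_sum hper
        _ = lowv.card * Fintype.card Ω := by rw [Finset.sum_const, smul_eq_mul]
    have hlowcard : 4 * lowv.card ≤ 2^d := by
      refine le_trans (Nat.mul_le_mul_left 4 (le_trans ?_ hlowct)) hnumA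
      apply Finset.card_le_card
      intro v hv
      simp only [hlowv, Finset.mem_filter, Finset.mem_univ, true_and] at hv ⊢
      exact hv.2
    have hfin : (4 * ((Finset.univ : Finset Ω).filter badA).card) * 2^d
        ≤ Fintype.card Ω * 2^d := by
      calc (4 * ((Finset.univ : Finset Ω).filter badA).card) * 2^d
          = 4 * (((Finset.univ : Finset Ω).filter badA).card * 2^d) := by ring
        _ ≤ 4 * (lowv.card * Fintype.card Ω) := Nat.mul_le_mul_left _ hcard
        _ = (4 * lowv.card) * Fintype.card Ω := by ring
        _ ≤ 2^d * Fintype.card Ω := Nat.mul_le_mul_right _ hlowcard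
        _ = Fintype.card Ω * 2^d := by ring
    exact Nat.le_of_mul_le_mul_right hfin (by positivity)
  -- Bound on bad B
  have hcardT : Fintype.card (Fin n → ZMod 2) = 2^n := by
    rw [Fintype.card_fun]
    simp
  have hcardU : Fintype.card (Fin d → ZMod 2) = 2^d := by
    rw [Fintype.card_fun]
    simp
  have hcardOmega : Fintype.card Ω
      = Fintype.card (Fin n → Fin d → ZMod 2) * 2^n := by
    rw [Fintype.card_prod, hcardT]
  have hB : 4 * ((Finset.univ : Finset Ω).filter badB).card ≤ Fintype.card Ω := by
    have hsub : (Finset.univ : Finset Ω).filter badB ⊆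
        ((Finset.univ : Finset (Fin d → ZMod 2)) ×ˢ Pb).biUnion
          (fun p => (Finset.univ : Finset Ω).filter
            (fun ω => (Finset.univ.filter
              fun i => ((∑ j, ω.1 i j * p.1 j) + ω.2 i) ≠ p.2 i).card ≤ n/256)) := by
      intro ω hω
      simp only [Finset.mem_filter, Finset.mem_univ, true_and, hbadB] at hω
      obtain ⟨u, z, hz, hcard⟩ := hω
      apply Finset.mem_biUnion.mpr
      refine ⟨(u, z), Finset.mem_product.mpr ⟨Finset.mem_univ u, hz⟩, ?_⟩
      simp only [Finset.mem_filter, Finset.mem_univ, true_and]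
      exact hcard
    have hper : ∀ p ∈ (Finset.univ : Finset (Fin d → ZMod 2)) ×ˢ Pb,
        ((Finset.univ : Finset Ω).filter
          (fun ω => (Finset.univ.filter
            fun i => ((∑ j, ω.1 i j * p.1 j) + ω.2 i) ≠ p.2 i).card ≤ n/256)).card
        ≤ Fintype.card (Fin n → Fin d → ZMod 2) * Nball := by
      intro p _
      have hW := card_filter_snd (α := Fin n → Fin d → ZMod 2)
        (fun s : Fin n → ZMod 2 => (Finset.univ.filter fun i => s i ≠ p.2 i).card ≤ n/256)
      have hstep : ((Finset.univ : Finset Ω).filter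
          (fun ω => (Finset.univ.filter
            fun i => ((∑ j, ω.1 i j * p.1 j) + ω.2 i) ≠ p.2 i).card ≤ n/256)).card
          ≤ ((Finset.univ : Finset Ω).filter
            (fun ω : Ω => (Finset.univ.filter fun i => ω.2 i ≠ p.2 i).card ≤ n/256)).card := by
        apply Finset.card_le_card_of_injOn
          (fun ω => (ω.1, fun i => (∑ j, ω.1 i j * p.1 j) + ω.2 i))
        · intro ω hω
          simp only [Finset.mem_coe, Finset.mem_filter, Finset.mem_univ, true_and] at hω ⊢
          exact hω
        · intro ω _ ω' _ he
          simp only [Prod.mk.injEq] at he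
          obtain ⟨h1, h2⟩ := he
          have hsnd : ω.2 = ω'.2 := by
            funext i
            have h := congrFun h2 i
            have h1s : (∑ j, ω.1 i j * p.1 j) = (∑ j, ω'.1 i j * p.1 j) := by rw [h1]
            rw [h1s] at h
            exact add_left_cancel h
          calc ω = (ω.1, ω.2) := rfl
            _ = (ω'.1, ω'.2) := by rw [h1, hsnd]
            _ = ω' := rfl
      refine le_trans hstep (le_trans (le_of_eq hW) ?_)
      exact Nat.mul_le_mul_left _ (hballct p.2)
    have hcard : ((Finset.univ : Finset Ω).filter badB).card
        ≤ (2^d * Pb.card) * (Fintype.card (Fin n → Fin d → ZMod 2) * Nball) := by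
      calc ((Finset.univ : Finset Ω).filter badB).card
          ≤ (((Finset.univ : Finset (Fin d → ZMod 2)) ×ˢ Pb).biUnion
            (fun p => (Finset.univ : Finset Ω).filter
              (fun ω => (Finset.univ.filter
                fun i => ((∑ j, ω.1 i j * p.1 j) + ω.2 i) ≠ p.2 i).card ≤ n/256))).card :=
            Finset.card_le_card hsub
        _ ≤ ∑ p ∈ (Finset.univ : Finset (Fin d → ZMod 2)) ×ˢ Pb,
            ((Finset.univ : Finset Ω).filter
              (fun ω => (Finset.univ.filter
                fun i => ((∑ j, ω.1 i j * p.1 j) + ω.2 i) ≠ p.2 i).card ≤ n/256)).card :=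
            Finset.card_biUnion_le
        _ ≤ ∑ _p ∈ (Finset.univ : Finset (Fin d → ZMod 2)) ×ˢ Pb,
            Fintype.card (Fin n → Fin d → ZMod 2) * Nball := Finset.sum_le_sum hper
        _ = ((Finset.univ : Finset (Fin d → ZMod 2)) ×ˢ Pb).card *
            (Fintype.card (Fin n → Fin d → ZMod 2) * Nball) := by
            rw [Finset.sum_const, smul_eq_mul]
        _ = (2^d * Pb.card) * (Fintype.card (Fin n → Fin d → ZMod 2) * Nball) := by
            rw [Finset.card_product, Finset.card_univ, hcardU]
    calc 4 * ((Finset.univ : Finset Ω).filter badB).card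
        ≤ 4 * ((2^d * Pb.card) * (Fintype.card (Fin n → Fin d → ZMod 2) * Nball)) :=
          Nat.mul_le_mul_left _ hcard
      _ = Fintype.card (Fin n → Fin d → ZMod 2) * (4 * (2^d * Pb.card * Nball)) := by ring
      _ ≤ Fintype.card (Fin n → Fin d → ZMod 2) * 2^n := Nat.mul_le_mul_left _ hnumB
      _ = Fintype.card Ω := hcardOmega.symm
  -- find a good ω
  have hpos : 0 < Fintype.card Ω := Fintype.card_pos
  have hbad : ((Finset.univ : Finset Ω).filter (fun ω => badA ω ∨ badB ω)).card
      < Fintype.card Ω := by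
    have hle : ((Finset.univ : Finset Ω).filter (fun ω => badA ω ∨ badB ω)).card
        ≤ ((Finset.univ : Finset Ω).filter badA).card
          + ((Finset.univ : Finset Ω).filter badB).card := by
      rw [Finset.filter_or]
      exact Finset.card_union_le _ _
    exact nat_lt_helper _ _ _ _ hle hA hB hpos
  obtain ⟨ω, hgood⟩ : ∃ ω : Ω, ¬(badA ω ∨ badB ω) := by
    by_contra hc
    push_neg at hc
    have hall : (Finset.univ : Finset Ω).filter (fun ω => badA ω ∨ badB ω) = Finset.univ := by
      apply Finset.filter_true_of_mem
      intro ω _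
      exact hc ω
    rw [hall, Finset.card_univ] at hbad
    exact absurd hbad (lt_irrefl _)
  push_neg at hgood
  obtain ⟨hgA, hgB⟩ := hgood
  refine ⟨ω.1, ω.2, ?_, ?_⟩
  · intro v hv hw
    by_contra hc
    push_neg at hc
    apply hgA
    rw [hbadA]
    exact ⟨v, hv, hw, fun j => hc j⟩
  · intro u z hz
    by_contra hc
    push_neg at hc
    apply hgB
    rw [hbadB]
    exact ⟨u, z, hz, hc⟩

end ExistsGood


end KW

namespace KW2

open scoped Classical

lemma card_small_sets (n r : ℕ) :
    ((Finset.univ : Finset (Finset (Fin n))).filter fun J => J.card ≤ r).card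
      = ∑ j ∈ Finset.range (r+1), n.choose j := by
  have hmap : ∀ J ∈ ((Finset.univ : Finset (Finset (Fin n))).filter fun J => J.card ≤ r),
      J.card ∈ Finset.range (r+1) := by
    intro J hJ
    simp only [Finset.mem_filter] at hJ
    simp only [Finset.mem_range]
    omega
  rw [Finset.card_eq_sum_card_fiberwise hmap]
  apply Finset.sum_congr rfl
  intro j hj
  simp only [Finset.mem_range] at hj
  have he : (((Finset.univ : Finset (Finset (Fin n))).filter fun J => J.card ≤ r).filter
      fun J => J.card = j) = Finset.powersetCard j Finset.univ := by
    ext J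
    simp only [Finset.mem_filter, Finset.mem_univ, true_and, Finset.mem_powersetCard,
      Finset.subset_univ]
    omega
  rw [he, Finset.card_powersetCard, Finset.card_univ, Fintype.card_fin]

lemma ball_card {n : ℕ} (c : Fin n → ZMod 2) (r : ℕ) :
    ((Finset.univ : Finset (Fin n → ZMod 2)).filter fun s =>
        (Finset.univ.filter fun i => s i ≠ c i).card ≤ r).card
      ≤ ∑ j ∈ Finset.range (r+1), n.choose j := by
  rw [← card_small_sets n r]
  apply Finset.card_le_card_of_injOn (fun s => Finset.univ.filter fun i => s i ≠ c i)
  · intro s hs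
    simp only [Finset.mem_coe, Finset.mem_filter, Finset.mem_univ, true_and] at hs ⊢
    exact hs
  · intro s₁ h₁ s₂ h₂ he
    funext i
    have hi := Finset.ext_iff.mp he i
    simp only [Finset.mem_filter, Finset.mem_univ, true_and] at hi
    rcases eq_or_ne (s₁ i) (c i) with h | h
    · rcases eq_or_ne (s₂ i) (c i) with h' | h'
      · rw [h, h']
      · exact absurd (hi.mpr h') (by simp [h])
    · exact KW.zmod2_ne _ _ _ h (hi.mp h)

lemma binom_sum_bound (n m a : ℕ) (ha : 2 ≤ a) (hm : m ≤ n) :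
    (∑ j ∈ Finset.range (m+1), n.choose j) * (a-1)^(n-m) ≤ a^n := by
  rw [Finset.sum_mul]
  have h2 : ∀ j ∈ Finset.range (m+1),
      n.choose j * (a-1)^(n-m) ≤ 1^j * (a-1)^(n-j) * n.choose j := by
    intro j hj
    simp only [Finset.mem_range] at hj
    simp only [one_pow, one_mul]
    rw [mul_comm]
    apply Nat.mul_le_mul_right
    apply Nat.pow_le_pow_right (by omega)
    omega
  calc ∑ j ∈ Finset.range (m+1), n.choose j * (a-1)^(n-m)
      ≤ ∑ j ∈ Finset.range (m+1), 1^j * (a-1)^(n-j) * n.choose j := Finset.sum_le_sum h2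
    _ ≤ ∑ j ∈ Finset.range (n+1), 1^j * (a-1)^(n-j) * n.choose j := by
        apply Finset.sum_le_sum_of_subset
        intro j hj
        simp only [Finset.mem_range] at hj ⊢
        omega
    _ = (1 + (a-1))^n := by
        rw [add_pow]
        simp [Nat.cast_id]
    _ = a^n := by congr 1; omega

lemma numfact1 : 2 * 5^40 ≤ 2^94 := by norm_num




set_option maxRecDepth 100000 in
set_option exponentiation.threshold 50000 in
lemma numfact2 : (2:ℕ)^40771 ≤ 255^5100 := by norm_num

lemma numA {n k d Nlow : ℕ} (hn : 230 ≤ n) (h5k : 5*k ≤ n) (hd : d = 3*n/4 + 1)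
    (hNlow : Nlow * 4^(n-k) ≤ 5^n) : 4 * Nlow ≤ 2^d := by
  have e1 : (Nlow * 4^(n-k))^40 = Nlow^40 * 2^(80*(n-k)) := by
    rw [mul_pow, ← pow_mul, show (4:ℕ) = 2^2 by norm_num, ← pow_mul]
    congr 2
    ring
  have e2 : Nlow^40 * 2^(80*(n-k)) ≤ 5^(40*n) := by
    rw [← e1, mul_comm 40 n, pow_mul]
    exact Nat.pow_le_pow_left hNlow 40
  have e3 : 5^(40*n) * 2^n ≤ 2^(94*n) := by
    calc 5^(40*n) * 2^n = (5^40)^n * 2^n := by rw [pow_mul]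
      _ = (5^40 * 2)^n := (mul_pow _ _ n).symm
      _ ≤ (2^94)^n := Nat.pow_le_pow_left (by norm_num) n
      _ = 2^(94*n) := by rw [← pow_mul, mul_comm]
  have earith : 94*n + 80 ≤ 40*d + (80*(n-k) + n) := by omega
  have big : (4*Nlow)^40 * (2^(80*(n-k)) * 2^n) ≤ (2^d)^40 * (2^(80*(n-k)) * 2^n) := by
    calc (4*Nlow)^40 * (2^(80*(n-k)) * 2^n)
        = (2^80 * (Nlow^40 * 2^(80*(n-k)))) * 2^n := by
          rw [mul_pow, show (4:ℕ)^40 = 2^80 by norm_num]; ring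
      _ ≤ (2^80 * 5^(40*n)) * 2^n := by
          apply Nat.mul_le_mul_right
          exact Nat.mul_le_mul_left _ e2
      _ = 2^80 * (5^(40*n) * 2^n) := by ring
      _ ≤ 2^80 * 2^(94*n) := Nat.mul_le_mul_left _ e3
      _ = 2^(94*n + 80) := by rw [← pow_add]; ring_nf
      _ ≤ 2^(40*d + (80*(n-k) + n)) := Nat.pow_le_pow_right (by norm_num) earith
      _ = (2^d)^40 * (2^(80*(n-k)) * 2^n) := by
          rw [pow_add, pow_add, ← pow_mul, mul_comm d 40]
  have key : (4 * Nlow)^40 ≤ (2^d)^40 :=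
    Nat.le_of_mul_le_mul_right big (by positivity)
  exact (Nat.pow_le_pow_iff_left (by norm_num)).mp key

lemma numB {n k' d P Nball : ℕ} (hn : 230 ≤ n) (hd : d = 3*n/4 + 1) (hk' : k' = n/256)
    (hP : P^5 ≤ 2^n) (hNball : Nball * 255^(n-k') ≤ 256^n) :
    4 * (2^d * P * Nball) ≤ 2^n := by
  have hstep : (2:ℕ)^(159*n+60) ≤ 255^(20*(n-k')) := by
    have hbase : (2:ℕ)^40771 ≤ 255^5100 := numfact2
    have h1 : (2:ℕ)^(40771*n) ≤ 255^(5100*n) := by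
      rw [pow_mul, pow_mul]
      exact Nat.pow_le_pow_left hbase n
    have harith : (159*n+60)*256 ≤ 40771*n := by omega
    have harith2 : 5100*n ≤ (20*(n-k'))*256 := by omega
    have h2 : ((2:ℕ)^(159*n+60))^256 ≤ (255^(20*(n-k')))^256 := by
      rw [← pow_mul, ← pow_mul]
      exact le_trans (Nat.pow_le_pow_right (by norm_num) harith)
        (le_trans h1 (Nat.pow_le_pow_right (by norm_num) harith2))
    exact (Nat.pow_le_pow_iff_left (by norm_num)).mp h2
  have hball20 : Nball^20 * 2^60 ≤ 2^n := by
    have h1 : Nball^20 * 255^(20*(n-k')) ≤ 2^(160*n) := by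
      calc Nball^20 * 255^(20*(n-k'))
          = (Nball * 255^(n-k'))^20 := by
            rw [mul_pow, ← pow_mul, mul_comm 20 (n-k')]
        _ ≤ (256^n)^20 := Nat.pow_le_pow_left hNball 20
        _ = 2^(160*n) := by
            rw [show (256:ℕ) = 2^8 by norm_num, ← pow_mul, ← pow_mul]
            congr 1; ring
    have h2 : (Nball^20 * 2^60) * 2^(159*n) ≤ 2^n * 2^(159*n) := by
      calc (Nball^20 * 2^60) * 2^(159*n)
          = Nball^20 * 2^(159*n+60) := by rw [mul_assoc, ← pow_add]; ring_nf
        _ ≤ Nball^20 * 255^(20*(n-k')) := Nat.mul_le_mul_left _ hstep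
        _ ≤ 2^(160*n) := h1
        _ = 2^n * 2^(159*n) := by rw [← pow_add]; congr 1; ring
    exact Nat.le_of_mul_le_mul_right h2 (by positivity)
  have hd20 : 20*d ≤ 15*n + 20 := by omega
  have key : (4 * (2^d * P * Nball))^20 ≤ (2^n)^20 := by
    calc (4 * (2^d * P * Nball))^20
        = 2^40 * 2^(20*d) * P^20 * Nball^20 := by
          rw [mul_pow, mul_pow, mul_pow, show (4:ℕ)^20 = 2^40 by norm_num,
            ← pow_mul, mul_comm d 20]
          ring
      _ ≤ 2^40 * 2^(15*n+20) * P^20 * Nball^20 := by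
          apply Nat.mul_le_mul_right
          apply Nat.mul_le_mul_right
          exact Nat.mul_le_mul_left _ (Nat.pow_le_pow_right (by norm_num) hd20)
      _ ≤ 2^40 * 2^(15*n+20) * 2^(4*n) * Nball^20 := by
          apply Nat.mul_le_mul_right
          apply Nat.mul_le_mul_left
          calc P^20 = (P^5)^4 := by rw [← pow_mul]
            _ ≤ (2^n)^4 := Nat.pow_le_pow_left hP 4
            _ = 2^(4*n) := by rw [← pow_mul, mul_comm]
      _ = (Nball^20 * 2^60) * 2^(19*n) := by ring
      _ ≤ 2^n * 2^(19*n) := Nat.mul_le_mul_right _ hball20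
      _ = (2^n)^20 := by rw [← pow_add, ← pow_mul]; congr 1; ring
  exact (Nat.pow_le_pow_iff_left (by norm_num)).mp key


end KW2

namespace KW
open scoped Classical

lemma zmod2_cases : ∀ a : ZMod 2, a = 0 ∨ a = 1 := by decide
lemma zmod2_10 : (1 : ZMod 2) ≠ 0 := by decide

lemma exists_far_indep {n k : ℕ} (hn : 230 ≤ n) (hkn : k ≤ n) (h5k : 5*k ≤ n)
    (P0 : Finset (Fin n → ℝ)) (hPcube : ∀ x ∈ P0, ∀ i, x i = 1 ∨ x i = -1)
    (hP : P0.card ^ 5 ≤ 2 ^ n) :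
    ∃ S : Finset (Fin n → ℝ), S.Nonempty ∧ (∀ x ∈ S, ∀ i, x i = 1 ∨ x i = -1) ∧
      kwiseIndep n k S ∧
      ∀ x ∈ S, ∀ z ∈ P0, n / 256 < (Finset.univ.filter fun j => x j ≠ z j).card := by
  set d := 3*n/4 + 1 with hd
  set zb : (Fin n → ℝ) → (Fin n → ZMod 2) := fun z i => if z i = 1 then 0 else 1 with hzb
  set β : ZMod 2 → ℝ := fun b => if b = 0 then 1 else -1 with hβ
  have hβ0 : β 0 = 1 := by simp [hβ]
  have hβ1 : β 1 = -1 := by simp [hβ, zmod2_10]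
  have hβcube : ∀ b : ZMod 2, β b = 1 ∨ β b = -1 := by
    intro b
    rcases zmod2_cases b with h | h <;> subst h
    · exact Or.inl hβ0
    · exact Or.inr hβ1
  have hβinj : ∀ a b : ZMod 2, β a = β b → a = b := by
    intro a b hab
    rcases zmod2_cases a with ha | ha <;> rcases zmod2_cases b with hb | hb <;>
        subst ha <;> subst hb <;> first
      | rfl
      | (exfalso; rw [hβ0, hβ1] at hab; norm_num at hab)
      | (exfalso; rw [hβ1, hβ0] at hab; norm_num at hab)
  have hβzb : ∀ z : Fin n → ℝ, (∀ i, z i = 1 ∨ z i = -1) → ∀ i, β (zb z i) = z i := by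
    intro z hz i
    rcases hz i with h | h
    · simp [hzb, h, hβ0]
    · have hne : z i ≠ 1 := by rw [h]; norm_num
      have hne2 : (-1:ℝ) ≠ 1 := by norm_num
      simp [hzb, hne, hβ1, h, hne2]
  -- the ZMod-2 image of Pi
  set Pb : Finset (Fin n → ZMod 2) := P0.image zb with hPb
  have hPb5 : Pb.card ^ 5 ≤ 2 ^ n :=
    le_trans (Nat.pow_le_pow_left (Finset.card_image_le) 5) hP
  -- numeric inputs
  have hnumA : 4 * (∑ j ∈ Finset.range (k+1), n.choose j) ≤ 2^d := by
    apply KW2.numA hn h5k hd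
    have := KW2.binom_sum_bound n k 5 (by norm_num) hkn
    norm_num at this
    exact this
  have hnumB : 4 * (2^d * Pb.card * (∑ j ∈ Finset.range (n/256+1), n.choose j)) ≤ 2^n := by
    apply KW2.numB hn hd rfl hPb5
    have := KW2.binom_sum_bound n (n/256) 256 (by norm_num) (Nat.div_le_self n 256)
    norm_num at this
    exact this
  have hlowct : (Finset.univ.filter fun v : Fin n → ZMod 2 =>
      (Finset.univ.filter fun i => v i ≠ 0).card ≤ k).card
        ≤ ∑ j ∈ Finset.range (k+1), n.choose j := KW2.ball_card (fun _ => 0) k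
  have hballct : ∀ z : Fin n → ZMod 2, ((Finset.univ : Finset (Fin n → ZMod 2)).filter fun s =>
      (Finset.univ.filter fun i => s i ≠ z i).card ≤ n/256).card
        ≤ ∑ j ∈ Finset.range (n/256+1), n.choose j := fun z => KW2.ball_card z (n/256)
  obtain ⟨G, t, hdual, hfar⟩ :=
    exists_good n k d hkn Pb _ _ hnumA hnumB hlowct hballct
  -- the affine map and its image
  set F : (Fin d → ZMod 2) → (Fin n → ZMod 2) := fun u i => (∑ j, G i j * u j) + t i with hF
  set T : Finset (Fin n → ZMod 2) := Finset.univ.image F with hT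
  set S : Finset (Fin n → ℝ) := T.image (fun w => fun i => β (w i)) with hS
  have hmapinj : Function.Injective (fun w : Fin n → ZMod 2 => fun i => β (w i)) := by
    intro w w' hww
    funext i
    exact hβinj _ _ (congrFun hww i)
  refine ⟨S, ?_, ?_, ?_, ?_⟩
  · -- nonempty
    rw [hS, hT]
    apply Finset.Nonempty.image
    apply Finset.Nonempty.image
    exact Finset.univ_nonempty
  · -- cube
    intro x hx i
    rw [hS] at hx
    obtain ⟨w, -, hwx⟩ := Finset.mem_image.mp hx
    rw [← hwx]
    exact hβcube (w i)
  · -- k-wise independence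
    intro I hI y hy
    -- transfer to the ZMod 2 side
    have hfilter : S.filter (fun x => ∀ i ∈ I, x i = y i)
        = (T.filter (fun w => ∀ i ∈ I, w i = zb y i)).image (fun w => fun i => β (w i)) := by
      ext x
      simp only [hS, Finset.mem_filter, Finset.mem_image]
      constructor
      · rintro ⟨⟨w, hwT, hwx⟩, hagree⟩
        refine ⟨w, ⟨hwT, fun i hi => ?_⟩, hwx⟩
        apply hβinj
        rw [hβzb y hy i]
        rw [← hwx] at hagree
        exact hagree i hi
      · rintro ⟨w, ⟨hwT, hagree⟩, hwx⟩
        refine ⟨⟨w, hwT, hwx⟩, fun i hi => ?_⟩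
        rw [← hwx]
        simp only
        rw [hagree i hi]
        exact hβzb y hy i
    have hScard : S.card = T.card := Finset.card_image_of_injective _ hmapinj
    rw [hfilter, Finset.card_image_of_injective _ hmapinj, hScard]
    -- now the ZMod 2 count
    -- linear part
    set Lf : (Fin d → ZMod 2) → (Fin n → ZMod 2) := fun u i => ∑ j, G i j * u j with hLf
    have hLadd : ∀ u v, Lf (u + v) = Lf u + Lf v := by
      intro u v
      funext i
      simp only [hLf, Pi.add_apply, mul_add, Finset.sum_add_distrib]
    set c₀ := (Finset.univ.filter fun u : Fin d → ZMod 2 => Lf u = 0).card with hc₀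
    have hFfib : ∀ u : Fin d → ZMod 2,
        (Finset.univ.filter fun u' => F u' = F u).card = c₀ := by
      intro u
      have he : (Finset.univ.filter fun u' : Fin d → ZMod 2 => F u' = F u)
          = Finset.univ.filter fun u' => Lf u' = Lf u := by
        ext u'
        simp only [Finset.mem_filter, Finset.mem_univ, true_and]
        constructor
        · intro h
          funext i
          have := congrFun h i
          simp only [hF] at this
          exact add_right_cancel this
        · intro h
          funext i
          simp only [hF]
          rw [show (∑ j, G i j * u' j) = Lf u' i from rfl,
            show (∑ j, G i j * u j) = Lf u i from rfl, h]
      rw [he]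
      exact fiber_card_add Lf hLadd u rfl
    have hcardU : Fintype.card (Fin d → ZMod 2) = 2^d := by
      rw [Fintype.card_fun]; simp
    have hTcard : T.card * c₀ = 2^d := by
      have := card_image_filter_mul F c₀ hFfib (fun _ => True)
      simp only [Finset.filter_true] at this
      rw [hT, this, Finset.card_univ, hcardU]
    -- restriction to I
    set φI : (Fin d → ZMod 2) → (↥I → ZMod 2) := fun u => fun i => ∑ j, G i.1 j * u j
      with hφI
    have hφadd : ∀ u v, φI (u + v) = φI u + φI v := by
      intro u v
      funext i
      simp only [hφI, Pi.add_apply, mul_add, Finset.sum_add_distrib]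
    have hψsurj : ∀ b : ↥I → ZMod 2, ∃ u, φI u = b := by
      intro b
      obtain ⟨u, hu⟩ := rows_surj G hdual I hI (fun i => if h : i ∈ I then b ⟨i, h⟩ else 0)
      refine ⟨u, ?_⟩
      funext i
      rw [hφI]
      simp only
      rw [hu i.1 i.2, dif_pos i.2]
    set c₂ := (Finset.univ.filter fun u : Fin d → ZMod 2 => φI u = 0).card with hc₂
    have hφfib : ∀ u : Fin d → ZMod 2,
        (Finset.univ.filter fun u' => φI u' = φI u).card = c₂ :=
      fun u => fiber_card_add φI hφadd u rfl
    have h2k : 2^k * c₂ = 2^d := by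
      have h := card_image_filter_mul φI c₂ hφfib (fun _ => True)
      simp only [Finset.filter_true] at h
      have himg : Finset.univ.image φI = (Finset.univ : Finset (↥I → ZMod 2)) := by
        apply Finset.eq_univ_of_forall
        intro b
        obtain ⟨u, hu⟩ := hψsurj b
        exact Finset.mem_image.mpr ⟨u, Finset.mem_univ u, hu⟩
      rw [himg, Finset.card_univ, Finset.card_univ, hcardU] at h
      rw [show Fintype.card (↥I → ZMod 2) = 2^k by
        rw [Fintype.card_fun, Fintype.card_coe, hI]; simp] at h
      exact h
    -- count of agreeing points
    have hAcount : (T.filter (fun w => ∀ i ∈ I, w i = zb y i)).card * c₀ = c₂ := by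
      have h := card_image_filter_mul F c₀ hFfib (fun w => ∀ i ∈ I, w i = zb y i)
      rw [hT, h]
      have he : (Finset.univ.filter fun u => ∀ i ∈ I, F u i = zb y i)
          = Finset.univ.filter fun u => φI u = (fun i : ↥I => zb y i.1 - t i.1) := by
        ext u
        simp only [Finset.mem_filter, Finset.mem_univ, true_and]
        constructor
        · intro h'
          funext i
          rw [hφI]
          simp only
          have := h' i.1 i.2
          simp only [hF] at this
          rw [eq_sub_iff_add_eq]
          exact this
        · intro h' i hi
          have := congrFun h' ⟨i, hi⟩
          simp only [hφI, hF] at this ⊢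
          rw [this]
          abel
      rw [he]
      obtain ⟨u₀, hu₀⟩ := hψsurj (fun i : ↥I => zb y i.1 - t i.1)
      exact fiber_card_add φI hφadd u₀ hu₀
    have hc₀pos : 0 < c₀ := by
      rw [hc₀]
      apply Finset.card_pos.mpr
      refine ⟨0, Finset.mem_filter.mpr ⟨Finset.mem_univ _, ?_⟩⟩
      funext i
      simp [hLf]
    -- combine
    have hfinal : ((T.filter (fun w => ∀ i ∈ I, w i = zb y i)).card * 2^k) * c₀
        = (T.card) * c₀ := by
      calc ((T.filter (fun w => ∀ i ∈ I, w i = zb y i)).card * 2^k) * c₀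
          = 2^k * ((T.filter (fun w => ∀ i ∈ I, w i = zb y i)).card * c₀) := by ring
        _ = 2^k * c₂ := by rw [hAcount]
        _ = 2^d := h2k
        _ = T.card * c₀ := hTcard.symm
    exact Nat.eq_of_mul_eq_mul_right hc₀pos hfinal
  · -- farness
    intro x hx z hz
    rw [hS] at hx
    obtain ⟨w, hwT, hwx⟩ := Finset.mem_image.mp hx
    rw [hT] at hwT
    obtain ⟨u, -, huw⟩ := Finset.mem_image.mp hwT
    have hzP : zb z ∈ Pb := Finset.mem_image_of_mem zb hz
    have hfl := hfar u (zb z) hzP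
    have he : (Finset.univ.filter fun j : Fin n => x j ≠ z j)
        = Finset.univ.filter fun i => ((∑ j, G i j * u j) + t i) ≠ zb z i := by
      ext i
      simp only [Finset.mem_filter, Finset.mem_univ, true_and]
      have hxi : x i = β (F u i) := by rw [← hwx, ← huw]
      have hzi : z i = β (zb z i) := (hβzb z (hPcube z hz) i).symm
      rw [hxi, hzi]
      constructor
      · intro hne hc
        apply hne
        rw [show F u i = (∑ j, G i j * u j) + t i from rfl, hc]
      · intro hne hc
        exact hne (show F u i = zb z i from hβinj _ _ hc)
    rw [he]
    exact hfl

end KW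

open scoped Classical


/-- **k-wise independent properties are hard for UPP.** For every sufficiently
small constant `ε > 0` and all large enough `n`: if `Π ⊆ {1,-1}ⁿ` is a
nonempty `k`-wise independent set (`k ≤ n`) with `|Π| < 2^{n/5}`, then every
unbounded-error randomized query algorithm (a distribution over decision trees
of depth at most `q`) that accepts every `x ∈ Π` with probability `> 1/2` and
rejects every point of the cube that is `ε`-far from `Π` with probability
`> 1/2` must satisfy `q ≥ k`. -/
theorem stmt18 : ∃ ε₀ : ℝ, 0 < ε₀ ∧ ∀ ε : ℝ, 0 < ε → ε < ε₀ →
    ∃ N : ℕ, ∀ n : ℕ, N ≤ n → ∀ k : ℕ, k ≤ n →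
    ∀ Pi : Finset (Fin n → ℝ),
      (∀ x ∈ Pi, ∀ i, x i = 1 ∨ x i = -1) → Pi.Nonempty →
      kwiseIndep n k Pi → (Pi.card : ℝ) < 2 ^ ((n : ℝ) / 5) →
    ∀ (I : Type) (_ : Fintype I) (w : I → ℝ) (T : I → DTree n) (q : ℕ),
      (∀ i, 0 ≤ w i) → ∑ i, w i = 1 → (∀ i, (T i).depth ≤ q) →
      (∀ x ∈ Pi, 1 / 2 <
        ∑ i ∈ Finset.univ.filter (fun i : I => (T i).eval x = true), w i) →
      (∀ x : Fin n → ℝ, (∀ j, x j = 1 ∨ x j = -1) →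
        (∀ z ∈ Pi, ε ≤ ((Finset.univ.filter (fun j : Fin n => x j ≠ z j)).card : ℝ) / n) →
        1 / 2 <
          ∑ i ∈ Finset.univ.filter (fun i : I => (T i).eval x = false), w i) →
      k ≤ q := by
  refine ⟨1/256, by norm_num, ?_⟩
  intro ε hε hεlt
  refine ⟨230, ?_⟩
  intro n hn k hkn Pi hPic hPine hPik hPicard Ity instI w T q hw hwsum hdep hacc hrej
  by_contra hqk
  push_neg at hqk
  have hn0 : 0 < n := lt_of_lt_of_le (by norm_num) hn
  -- 2^k ≤ Pi.card
  obtain ⟨I0, hI0sub, hI0card⟩ := Finset.exists_subset_card_eq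
    (show k ≤ (Finset.univ : Finset (Fin n)).card by
      simpa [Finset.card_univ] using hkn)
  obtain ⟨x₀, hx₀⟩ := hPine
  have hkw := hPik I0 hI0card x₀ (hPic x₀ hx₀)
  have hfilpos : 0 < (Pi.filter (fun x => ∀ i ∈ I0, x i = x₀ i)).card :=
    Finset.card_pos.mpr ⟨x₀, Finset.mem_filter.mpr ⟨hx₀, fun i _ => rfl⟩⟩
  have h2k : 2^k ≤ Pi.card := by
    calc 2^k = 1 * 2^k := (one_mul _).symm
      _ ≤ (Pi.filter (fun x => ∀ i ∈ I0, x i = x₀ i)).card * 2^k :=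
          Nat.mul_le_mul_right _ hfilpos
      _ = Pi.card := hkw
  have h2kR : ((2:ℝ))^(k:ℝ) < (2:ℝ)^((n:ℝ)/5) := by
    calc (2:ℝ)^(k:ℝ) = ((2^k : ℕ) : ℝ) := by
          rw [Real.rpow_natCast]; push_cast; ring
      _ ≤ (Pi.card : ℝ) := by exact_mod_cast h2k
      _ < _ := hPicard
  have hk5 : (k:ℝ) < (n:ℝ)/5 :=
    (Real.rpow_lt_rpow_left_iff (by norm_num : (1:ℝ) < 2)).mp h2kR
  have h5k : 5*k ≤ n := by
    have h1 : (5*k : ℝ) < n := by push_cast; linarith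
    have h2 : 5*k < n := by exact_mod_cast h1
    exact Nat.le_of_lt h2
  have hP5 : Pi.card^5 ≤ 2^n := by
    have h1 : (Pi.card : ℝ)^(5:ℕ) < ((2:ℝ)^((n:ℝ)/5))^(5:ℕ) :=
      pow_lt_pow_left₀ hPicard (by positivity) (by norm_num)
    have h2 : ((2:ℝ)^((n:ℝ)/5))^(5:ℕ) = (2:ℝ)^(n:ℕ) := by
      rw [← Real.rpow_natCast ((2:ℝ)^((n:ℝ)/5)) 5, ← Real.rpow_mul (by norm_num : (0:ℝ) ≤ 2)]
      push_cast
      rw [div_mul_cancel₀ _ (by norm_num : (5:ℝ) ≠ 0)]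
      rw [Real.rpow_natCast]
    rw [h2] at h1
    have h3 : (Pi.card:ℝ)^(5:ℕ) = ((Pi.card^5 : ℕ) : ℝ) := by push_cast; ring
    have h4 : ((Pi.card^5 : ℕ) : ℝ) < ((2^n : ℕ) : ℝ) := by
      rw [← h3]; push_cast; exact h1
    exact_mod_cast h4.le
  -- far k-wise independent set
  obtain ⟨S, hSne, hScube, hSkw, hSfar⟩ := KW.exists_far_indep hn hkn h5k Pi hPic hP5
  have hSfarε : ∀ x ∈ S, ∀ z ∈ Pi,
      ε ≤ ((Finset.univ.filter fun j : Fin n => x j ≠ z j).card : ℝ) / n := by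
    intro x hx z hz
    have h1 := hSfar x hx z hz
    have h2 : n < 256 * (Finset.univ.filter fun j : Fin n => x j ≠ z j).card := by
      have hmod := Nat.div_add_mod n 256
      have hltm : n % 256 < 256 := Nat.mod_lt _ (by norm_num)
      have hle : n/256 + 1 ≤ (Finset.univ.filter fun j : Fin n => x j ≠ z j).card := h1
      calc n = 256*(n/256) + n%256 := hmod.symm
        _ < 256*(n/256) + 256 := Nat.add_lt_add_left hltm _
        _ = 256*(n/256 + 1) := by ring
        _ ≤ 256 * (Finset.univ.filter fun j : Fin n => x j ≠ z j).card :=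
            Nat.mul_le_mul_left _ hle
    have h2R : (n:ℝ) < 256 * ((Finset.univ.filter fun j : Fin n => x j ≠ z j).card : ℝ) := by
      exact_mod_cast h2
    have h3 : (1:ℝ)/256 < ((Finset.univ.filter fun j : Fin n => x j ≠ z j).card : ℝ) / n := by
      rw [div_lt_div_iff₀ (by norm_num) (by exact_mod_cast hn0)]
      linarith
    linarith
  -- balancedness
  have hBalP := KW.bal_of_kwise hkn hPic hPik
  have hBalS := KW.bal_of_kwise hkn hScube hSkw
  have htree : ∀ i : Ity, ((Pi.filter fun x => (T i).eval x = true).card) * S.card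
      = ((S.filter fun x => (T i).eval x = true).card) * Pi.card := by
    intro i
    have h := KW.tree_count hBalP hPic hBalS hScube (T i) ∅ (fun _ => 1)
      (fun _ => Or.inl rfl)
      (by
        simp only [Finset.card_empty, Nat.add_zero]
        exact le_trans (hdep i) (Nat.le_of_lt hqk))
    simpa using h
  -- sum swapping
  have hswap : ∀ (Q : Finset (Fin n → ℝ)),
      ∑ x ∈ Q, ∑ i ∈ Finset.univ.filter (fun i : Ity => (T i).eval x = true), w i
        = ∑ i : Ity, w i * ((Q.filter fun x => (T i).eval x = true).card : ℝ) := by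
    intro Q
    calc ∑ x ∈ Q, ∑ i ∈ Finset.univ.filter (fun i : Ity => (T i).eval x = true), w i
        = ∑ x ∈ Q, ∑ i : Ity, if (T i).eval x = true then w i else 0 := by
          apply Finset.sum_congr rfl
          intro x _
          rw [Finset.sum_filter]
      _ = ∑ i : Ity, ∑ x ∈ Q, if (T i).eval x = true then w i else 0 := Finset.sum_comm
      _ = ∑ i : Ity, w i * ((Q.filter fun x => (T i).eval x = true).card : ℝ) := by
          apply Finset.sum_congr rfl
          intro i _
          rw [← Finset.sum_filter, Finset.sum_const, nsmul_eq_mul]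
          ring
  have hPpos : (0:ℝ) < Pi.card := by
    exact_mod_cast Finset.card_pos.mpr ⟨x₀, hx₀⟩
  have hSpos : (0:ℝ) < S.card := by
    exact_mod_cast Finset.card_pos.mpr hSne
  -- accepted mass
  have hAcc : (Pi.card : ℝ) * (1/2)
      < ∑ i : Ity, w i * ((Pi.filter fun x => (T i).eval x = true).card : ℝ) := by
    have hsum := Finset.sum_lt_sum_of_nonempty ⟨x₀, hx₀⟩ hacc
    rw [Finset.sum_const, nsmul_eq_mul, hswap Pi] at hsum
    exact hsum
  -- rejected mass
  have hRej : ∑ i : Ity, w i * ((S.filter fun x => (T i).eval x = true).card : ℝ)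
      < (S.card : ℝ) * (1/2) := by
    have hper : ∀ x ∈ S,
        ∑ i ∈ Finset.univ.filter (fun i : Ity => (T i).eval x = true), w i < 1/2 := by
      intro x hx
      have h1 := hrej x (hScube x hx) (fun z hz => hSfarε x hx z hz)
      have h2 := Finset.sum_filter_add_sum_filter_not Finset.univ
        (fun i : Ity => (T i).eval x = true) w
      rw [hwsum] at h2
      have h3 : Finset.univ.filter (fun i : Ity => ¬ (T i).eval x = true)
          = Finset.univ.filter (fun i : Ity => (T i).eval x = false) := by
        apply Finset.filter_congr
        intro i _
        simp
      rw [h3] at h2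
      linarith
    have hsum := Finset.sum_lt_sum_of_nonempty hSne hper
    rw [Finset.sum_const, nsmul_eq_mul, hswap S] at hsum
    exact hsum
  -- equality of the two averages
  have hEq : (∑ i : Ity, w i * ((Pi.filter fun x => (T i).eval x = true).card : ℝ)) * S.card
      = (∑ i : Ity, w i * ((S.filter fun x => (T i).eval x = true).card : ℝ)) * Pi.card := by
    rw [Finset.sum_mul, Finset.sum_mul]
    apply Finset.sum_congr rfl
    intro i _
    have h1 : (((Pi.filter fun x => (T i).eval x = true).card : ℝ)) * S.card
        = ((S.filter fun x => (T i).eval x = true).card : ℝ) * Pi.card := by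
      exact_mod_cast htree i
    calc w i * ((Pi.filter fun x => (T i).eval x = true).card : ℝ) * S.card
        = w i * (((Pi.filter fun x => (T i).eval x = true).card : ℝ) * S.card) := by ring
      _ = w i * (((S.filter fun x => (T i).eval x = true).card : ℝ) * Pi.card) := by rw [h1]
      _ = w i * ((S.filter fun x => (T i).eval x = true).card : ℝ) * Pi.card := by ring
  have h1 : (Pi.card:ℝ) * (1/2) * S.card
      < (∑ i : Ity, w i * ((Pi.filter fun x => (T i).eval x = true).card : ℝ)) * S.card :=
    mul_lt_mul_of_pos_right hAcc hSpos
  have h2 : (∑ i : Ity, w i * ((S.filter fun x => (T i).eval x = true).card : ℝ)) * Pi.card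
      < (S.card:ℝ) * (1/2) * Pi.card :=
    mul_lt_mul_of_pos_right hRej hPpos
  rw [hEq] at h1
  have h3 := lt_trans h1 h2
  have h4 : (Pi.card:ℝ) * (1/2) * S.card = (S.card:ℝ) * (1/2) * Pi.card := by ring
  rw [h4] at h3
  exact lt_irrefl _ h3
end

section
/- For any partial Boolean function f : X → {1,-1} with X ⊆ {1,-1}^n, the minimal query complexity of an unbounded-error randomized query (UPP) algorithm computing f equals the threshold degree of f. -/
open scoped Classical

/-!
On the cube `{1,-1}ⁿ` a decision tree of depth `q` agrees with a polynomial of degree `≤ q`: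
sum, over the leaves, the output times the product of the indicators `(1 ± xᵢ)/2` along the
path. Averaging these over a UPP algorithm gives a polynomial whose value at `x` is
`Pr[correct] - Pr[wrong]` times `f x`, hence of the sign of `f x`.

Conversely, write `p = ∑ c_d x^d` and let `W = ∑ |c_d|`. Sample `d` with probability
`|c_d| / W`, query the variables of `x^d` and output `sgn(c_d) x^d`. The expected output is
`p(x) / W`, so the correct answer `f x = sgn p(x)` is output with probability `> 1/2`.
-/

open MvPolynomial Finset

namespace DTree

variable {n : ℕ}

noncomputable def toPoly : DTree n → MvPolynomial (Fin n) ℝ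
  | .leaf b => C (if b then 1 else -1)
  | .node i l r => C (1 / 2) * ((1 + X i) * l.toPoly + (1 - X i) * r.toPoly)

theorem totalDegree_toPoly_le (T : DTree n) : T.toPoly.totalDegree ≤ T.depth := by
  induction T with
  | leaf b => simp [toPoly, depth]
  | node i l r hl hr =>
    have hplus : (1 + X i : MvPolynomial (Fin n) ℝ).totalDegree ≤ 1 :=
      (totalDegree_add _ _).trans (by simp [totalDegree_X])
    have hminus : (1 - X i : MvPolynomial (Fin n) ℝ).totalDegree ≤ 1 :=
      (totalDegree_sub _ _).trans (by simp [totalDegree_X])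
    calc (toPoly (.node i l r)).totalDegree
        ≤ max ((1 + X i) * l.toPoly).totalDegree ((1 - X i) * r.toPoly).totalDegree := by
          refine (totalDegree_mul _ _).trans ?_
          simpa using totalDegree_add _ _
      _ ≤ max (1 + l.depth) (1 + r.depth) := by
          gcongr
          · exact (totalDegree_mul _ _).trans (add_le_add hplus hl)
          · exact (totalDegree_mul _ _).trans (add_le_add hminus hr)
      _ = (DTree.node i l r).depth := by simp [depth]; omega

theorem eval_toPoly (T : DTree n) {x : Fin n → ℝ} (hx : ∀ i, x i = 1 ∨ x i = -1) :
    MvPolynomial.eval x T.toPoly = if T.eval x then 1 else -1 := by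
  induction T with
  | leaf b => cases b <;> simp [toPoly, DTree.eval]
  | node i l r hl hr =>
    rcases hx i with h | h
    · simp only [toPoly, DTree.eval, h, if_true, map_mul, map_add, map_sub, map_one, eval_C,
        eval_X, hl, hr]
      norm_num
    · simp only [toPoly, DTree.eval, map_mul, map_add, map_sub, map_one, eval_C, eval_X, hl, hr, h]
      norm_num

def parity (b : Bool) : List (Fin n) → DTree n
  | [] => .leaf b
  | i :: L => .node i (parity b L) (parity (!b) L)

theorem depth_parity (b : Bool) (L : List (Fin n)) : (parity b L).depth = L.length := by
  induction L generalizing b with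
  | nil => rfl
  | cons i L ih => simp [parity, depth, ih]

theorem eval_parity {x : Fin n → ℝ} (hx : ∀ i, x i = 1 ∨ x i = -1) (b : Bool)
    (L : List (Fin n)) :
    (if (parity b L).eval x then (1 : ℝ) else -1) = (if b then 1 else -1) * (L.map x).prod := by
  induction L generalizing b with
  | nil => simp [parity, DTree.eval]
  | cons i L ih =>
    rcases hx i with h | h
    · simp only [parity, DTree.eval, h, if_true, ih, List.map_cons, List.prod_cons]
      ring
    · simp only [parity, DTree.eval, h, List.map_cons, List.prod_cons]
      cases b <;> norm_num [ih]

noncomputable def ofMonomial (d : Fin n →₀ ℕ) (b : Bool) : DTree n :=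
  parity b d.toMultiset.toList

theorem depth_ofMonomial (d : Fin n →₀ ℕ) (b : Bool) :
    (ofMonomial d b).depth = Multiset.card d.toMultiset := by
  simp [ofMonomial, depth_parity]

theorem eval_ofMonomial {x : Fin n → ℝ} (hx : ∀ i, x i = 1 ∨ x i = -1) (d : Fin n →₀ ℕ)
    (b : Bool) :
    (if (ofMonomial d b).eval x then (1 : ℝ) else -1)
      = (if b then 1 else -1) * d.prod fun i k => x i ^ k := by
  rw [ofMonomial, eval_parity hx, Multiset.prod_map_toList, Finsupp.toMultiset_map,
    Finsupp.prod_toMultiset, Finsupp.prod_mapDomain_index (fun _ => pow_zero _)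
    (fun _ _ _ => pow_add _ _ _)]

end DTree

theorem mul_sum_eq_two_mul_sum_filter_sub_sum {I : Type*} (s : Finset I) (w o : I → ℝ) {c : ℝ}
    (ho : ∀ i ∈ s, o i = 1 ∨ o i = -1) (hc : c = 1 ∨ c = -1) :
    c * ∑ i ∈ s, w i * o i = 2 * ∑ i ∈ s with o i = c, w i - ∑ i ∈ s, w i := by
  calc c * ∑ i ∈ s, w i * o i = ∑ i ∈ s, if o i = c then w i else -w i := by
        rw [mul_sum]
        refine sum_congr rfl fun i hi => ?_
        rcases ho i hi with h | h <;> rcases hc with rfl | rfl <;> norm_num [h]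
    _ = ∑ i ∈ s with o i = c, w i - ∑ i ∈ s with ¬o i = c, w i := by
        rw [sum_ite, sum_neg_distrib, sub_eq_add_neg]
    _ = 2 * ∑ i ∈ s with o i = c, w i - ∑ i ∈ s, w i := by
        rw [← sum_filter_add_sum_filter_not s (fun i => o i = c) w]
        ring

theorem half_lt_sum_filter_iff {I : Type*} [Fintype I] {w o : I → ℝ} {c : ℝ}
    (hw : ∑ i, w i = 1) (ho : ∀ i, o i = 1 ∨ o i = -1) (hc : c = 1 ∨ c = -1) :
    1 / 2 < ∑ i with o i = c, w i ↔ 0 < c * ∑ i, w i * o i := by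
  rw [mul_sum_eq_two_mul_sum_filter_sub_sum _ w o (fun i _ => ho i) hc, hw]
  constructor <;> intro h <;> linarith

theorem abs_mul_ite_pos (c : ℝ) : |c| * (if 0 < c then 1 else -1) = c := by
  split_ifs with h
  · simp [abs_of_pos h]
  · simp [abs_of_nonpos (not_lt.1 h)]

section UPP

variable {n : ℕ} {X : Finset (Fin n → ℝ)} {f : (Fin n → ℝ) → ℝ} {q : ℕ}

def HasUPPAlgorithm (X : Finset (Fin n → ℝ)) (f : (Fin n → ℝ) → ℝ) (q : ℕ) : Prop :=
  ∃ (I : Type) (_ : Fintype I) (w : I → ℝ) (T : I → DTree n),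
    (∀ i, 0 ≤ w i) ∧ ∑ i, w i = 1 ∧ (∀ i, (T i).depth ≤ q) ∧
    ∀ x ∈ X, 1 / 2 < ∑ i with (if (T i).eval x then (1 : ℝ) else -1) = f x, w i

def HasSignRepresentation (X : Finset (Fin n → ℝ)) (f : (Fin n → ℝ) → ℝ) (q : ℕ) : Prop :=
  ∃ p : MvPolynomial (Fin n) ℝ, p.totalDegree ≤ q ∧ ∀ x ∈ X, 0 < f x * MvPolynomial.eval x p

theorem HasUPPAlgorithm.mono {q' : ℕ} (h : HasUPPAlgorithm X f q) (hq : q ≤ q') :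
    HasUPPAlgorithm X f q' :=
  let ⟨I, hI, w, T, hw₀, hw₁, hT, hmaj⟩ := h
  ⟨I, hI, w, T, hw₀, hw₁, fun i => (hT i).trans hq, hmaj⟩

theorem HasUPPAlgorithm.hasSignRepresentation (hX : ∀ x ∈ X, ∀ i, x i = 1 ∨ x i = -1)
    (hf : ∀ x ∈ X, f x = 1 ∨ f x = -1) (h : HasUPPAlgorithm X f q) :
    HasSignRepresentation X f q := by
  obtain ⟨I, _, w, T, -, hw, hT, hmaj⟩ := h
  refine ⟨∑ i, C (w i) * (T i).toPoly, totalDegree_finsetSum_le fun i _ => ?_, fun x hx => ?_⟩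
  · refine (totalDegree_mul _ _).trans ?_
    simpa using (T i).totalDegree_toPoly_le.trans (hT i)
  · have hexp : eval x (∑ i, C (w i) * (T i).toPoly)
        = ∑ i, w i * if (T i).eval x then 1 else -1 := by
      simp [(T _).eval_toPoly (hX x hx)]
    rw [hexp, ← half_lt_sum_filter_iff hw (fun i => by split_ifs <;> simp) (hf x hx)]
    exact hmaj x hx

theorem hasUPPAlgorithm_totalDegree (hX : ∀ x ∈ X, ∀ i, x i = 1 ∨ x i = -1)
    (hf : ∀ x ∈ X, f x = 1 ∨ f x = -1) {p : MvPolynomial (Fin n) ℝ}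
    (hp : ∀ x ∈ X, 0 < f x * eval x p) : HasUPPAlgorithm X f p.totalDegree := by
  -- For `X = ∅` the polynomial may vanish, leaving no weights to normalise.
  rcases X.eq_empty_or_nonempty with rfl | ⟨x₀, hx₀⟩
  · exact ⟨Unit, inferInstance, fun _ => 1, fun _ => .leaf true, by simp, by simp,
      by simp [DTree.depth], by simp⟩
  have hp₀ : p ≠ 0 := by
    rintro rfl
    simpa using hp x₀ hx₀
  set W := ∑ d ∈ p.support, |p.coeff d|
  have hW : 0 < W := by
    obtain ⟨d, hd⟩ := support_nonempty.2 hp₀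
    exact sum_pos' (fun d _ => abs_nonneg _) ⟨d, hd, abs_pos.2 (mem_support_iff.1 hd)⟩
  have hw : ∑ d : p.support, |p.coeff d| / W = 1 := by
    rw [← sum_div, sum_coe_sort p.support fun d => |p.coeff d|, div_self hW.ne']
  refine ⟨p.support, inferInstance, fun d => |p.coeff d| / W,
    fun d => DTree.ofMonomial d (decide (0 < p.coeff d)), fun d => by positivity, hw,
    fun d => ?_, fun x hx => ?_⟩
  · rw [DTree.depth_ofMonomial, totalDegree_eq]
    exact le_sup (f := fun m => Multiset.card m.toMultiset) d.2
  · have hexp : ∑ d : p.support, |p.coeff d| / W *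
          (if (DTree.ofMonomial d (decide (0 < p.coeff d))).eval x then 1 else -1)
        = eval x p / W := by
      simp_rw [DTree.eval_ofMonomial (hX x hx), eval_eq, sum_div]
      rw [← sum_coe_sort p.support]
      refine sum_congr rfl fun d _ => ?_
      simp only [decide_eq_true_eq, Finsupp.prod]
      linear_combination (∏ i ∈ (d : Fin n →₀ ℕ).support, x i ^ (d : Fin n →₀ ℕ) i) / W *
        abs_mul_ite_pos (p.coeff d)
    rw [half_lt_sum_filter_iff hw (fun d => by split_ifs <;> simp) (hf x hx), hexp,
      mul_div_assoc']
    exact div_pos (hp x hx) hW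

end UPP

/-- **UPP query complexity equals threshold degree.** For a partial Boolean
function `f : X → {1,-1}` on `X ⊆ {1,-1}ⁿ` and every `q`, there exists an
unbounded-error randomized query algorithm of query complexity `q` computing
`f` (a distribution over depth-`≤ q` decision trees outputting `f(x)` with
probability `> 1/2` on each `x ∈ X`) if and only if there exists a real
polynomial of degree at most `q` sign-representing `f` on `X`. Hence the
minimal UPP query complexity equals the threshold degree. -/
theorem stmt19 (n : ℕ) (X : Finset (Fin n → ℝ))
    (hX : ∀ x ∈ X, ∀ i, x i = 1 ∨ x i = -1)
    (f : (Fin n → ℝ) → ℝ) (hf : ∀ x ∈ X, f x = 1 ∨ f x = -1)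
    (q : ℕ) :
    (∃ (I : Type) (_ : Fintype I) (w : I → ℝ) (T : I → DTree n),
      (∀ i, 0 ≤ w i) ∧ ∑ i, w i = 1 ∧ (∀ i, (T i).depth ≤ q) ∧
      ∀ x ∈ X, 1 / 2 <
        ∑ i ∈ Finset.univ.filter
            (fun i : I => (if (T i).eval x then (1:ℝ) else -1) = f x), w i)
    ↔ (∃ p : MvPolynomial (Fin n) ℝ, p.totalDegree ≤ q ∧
        ∀ x ∈ X, 0 < f x * MvPolynomial.eval x p) := by
  exact ⟨HasUPPAlgorithm.hasSignRepresentation hX hf,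
    fun ⟨_, hdeg, hp⟩ => (hasUPPAlgorithm_totalDegree hX hf hp).mono hdeg⟩
end
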